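/- Under Assumptions 0 and 1, for q* ∈ S° the following are equivalent: (i) q* is the global maximum of ℓ over S, i.e. ℓ(q) ≤ ℓ(q*) for all q ∈ S; (ii) q* is a fixed point of L, i.e. q*_k · g(q*)_k = q*_k for all k = 1, …, K. -/

import Mathlib

open scoped BigOperators

/-- Membership in the simplex `S = {q : q_k ≥ 0, Σ_k q_k = 1}`. -/
def memS {K : ℕ} (q : Fin K → ℝ) : Prop :=
  (∀ k, 0 ≤ q k) ∧ ∑ k, q k = 1

/-- Membership in the relative interior `S° = {q ∈ S : q_k > 0 for all k}`. -/
def memSInt {K : ℕ} (q : Fin K → ℝ) : Prop :=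
  (∀ k, 0 < q k) ∧ ∑ k, q k = 1

/-- The (normalized) log-likelihood of the admixture model, with values in the
extended reals, using the convention `x · log 0 = −∞` for `x > 0` (and the term
is `0` when `x = 0`). -/
noncomputable def ell {K I M : ℕ} (p : Fin K → Fin I → Fin M → ℝ)
    (x : Fin I → Fin M → ℕ) (q : Fin K → ℝ) : EReal :=
  ((1 / (2 * (M : ℝ)) : ℝ) : EReal) *
    ∑ m : Fin M, ∑ i : Fin I,
      (if x i m = 0 then (0 : EReal)
       else if (∑ k : Fin K, q k * p k i m) ≤ 0 then (⊥ : EReal)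
       else (((x i m : ℝ) * Real.log (∑ k : Fin K, q k * p k i m) : ℝ) : EReal))

/-- The `k`-th component of the gradient of the log-likelihood at `q`. -/
noncomputable def gradEll {K I M : ℕ} (p : Fin K → Fin I → Fin M → ℝ)
    (x : Fin I → Fin M → ℕ) (q : Fin K → ℝ) (k : Fin K) : ℝ :=
  (1 / (2 * (M : ℝ))) *
    ∑ m : Fin M, ∑ i : Fin I,
      (x i m : ℝ) * p k i m / (∑ l : Fin K, q l * p l i m)

/-!
Put `logLik q = ∑ x_im log ⟨q, p_im⟩` and `score q k = ∑ x_im p_kim / ⟨q, p_im⟩`, so that where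
`ℓ` is finite (`LogLikFinite`) `ℓ = logLik / (2M)`, and `g = score / (2M)`. As `∑_i x_im = 2`,
the fixed points of `L` in `S°` are the points whose score is the constant `N = ∑ x_im = 2M`.
Euler's identity for the logarithmically homogeneous `logLik` reads `∑_k q_k score q k = N`.

The bound `log b - log a ≤ b / a - 1` gives the tangent-line inequality
`logLik q' - logLik q ≤ ∑_k q'_k score q k - N`, whose right-hand side vanishes on `S` when the
score at `q` is constant. Conversely, at a maximiser `q*` in the interior of `S` the derivative of
`logLik` along `e_k - q*` vanishes, and by Euler's identity it equals `score q* k - N`.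
-/

open Finset Filter Topology

section LogLikelihood

variable {κ ι μ : Type*} [Fintype κ] (p : κ → ι → μ → ℝ) (x : ι → μ → ℕ)

def LogLikFinite (q : κ → ℝ) : Prop :=
  ∀ i m, 0 < x i m → 0 < ∑ k, q k * p k i m

variable {p x} in
lemma logLikFinite_of_pos (hp : ∀ k i m, 0 ≤ p k i m)
    (hA0 : ∀ i m, 0 < x i m → ∃ k, 0 < p k i m) {q : κ → ℝ} (hq : ∀ k, 0 < q k) :
    LogLikFinite p x q := by
  intro i m hx
  obtain ⟨k, hk⟩ := hA0 i m hx
  exact lt_of_lt_of_le (mul_pos (hq k) hk)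
    (single_le_sum (fun l _ => mul_nonneg (hq l).le (hp l i m)) (mem_univ k))

variable [Fintype ι] [Fintype μ]

noncomputable def logLik (q : κ → ℝ) : ℝ :=
  ∑ m, ∑ i, (x i m : ℝ) * Real.log (∑ k, q k * p k i m)

noncomputable def score (q : κ → ℝ) (k : κ) : ℝ :=
  ∑ m, ∑ i, (x i m : ℝ) * p k i m / ∑ l, q l * p l i m

variable {p x}

lemma sum_mul_score (q q' : κ → ℝ) :
    ∑ k, q' k * score p x q k =
      ∑ m, ∑ i, (x i m : ℝ) * (∑ k, q' k * p k i m) / ∑ k, q k * p k i m := by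
  simp only [score, mul_sum, sum_div]
  rw [sum_comm]
  refine sum_congr rfl fun m _ => ?_
  rw [sum_comm]
  exact sum_congr rfl fun i _ => sum_congr rfl fun k _ => by ring

lemma sum_mul_score_self {q : κ → ℝ} (hq : LogLikFinite p x q) :
    ∑ k, q k * score p x q k = ∑ m, ∑ i, (x i m : ℝ) := by
  rw [sum_mul_score]
  refine sum_congr rfl fun m _ => sum_congr rfl fun i _ => ?_
  rcases (x i m).eq_zero_or_pos with hx | hx
  · simp [hx]
  · exact mul_div_cancel_right₀ _ (hq i m hx).ne'

lemma logLik_sub_le {q q' : κ → ℝ} (hq : LogLikFinite p x q) (hq' : LogLikFinite p x q') :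
    logLik p x q' - logLik p x q ≤ ∑ k, q' k * score p x q k - ∑ m, ∑ i, (x i m : ℝ) := by
  rw [sum_mul_score, logLik, logLik, ← sum_sub_distrib, ← sum_sub_distrib]
  refine sum_le_sum fun m _ => ?_
  rw [← sum_sub_distrib, ← sum_sub_distrib]
  refine sum_le_sum fun i _ => ?_
  rcases (x i m).eq_zero_or_pos with hx | hx
  · simp [hx]
  have ha := hq i m hx
  have hb := hq' i m hx
  have hlog := Real.log_le_sub_one_of_pos (div_pos hb ha)
  rw [Real.log_div hb.ne' ha.ne'] at hlog
  calc (x i m : ℝ) * Real.log (∑ k, q' k * p k i m) - x i m * Real.log (∑ k, q k * p k i m)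
      = x i m * (Real.log (∑ k, q' k * p k i m) - Real.log (∑ k, q k * p k i m)) := by ring
    _ ≤ x i m * ((∑ k, q' k * p k i m) / (∑ k, q k * p k i m) - 1) := by gcongr
    _ = x i m * (∑ k, q' k * p k i m) / (∑ k, q k * p k i m) - x i m := by ring

lemma hasDerivAt_logLik_line {q : κ → ℝ} (hq : LogLikFinite p x q) (d : κ → ℝ) :
    HasDerivAt (fun t : ℝ => logLik p x (q + t • d)) (∑ k, d k * score p x q k) 0 := by
  rw [sum_mul_score]
  refine HasDerivAt.fun_sum fun m _ => HasDerivAt.fun_sum fun i _ => ?_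
  rcases (x i m).eq_zero_or_pos with hx | hx
  · simpa [hx] using hasDerivAt_const (0 : ℝ) (0 : ℝ)
  have hline : HasDerivAt (fun t : ℝ => ∑ k, (q + t • d) k * p k i m)
      (∑ k, d k * p k i m) 0 := by
    simp only [Pi.add_apply, Pi.smul_apply, smul_eq_mul, add_mul, sum_add_distrib, mul_assoc,
      ← mul_sum]
    simpa using ((hasDerivAt_id (0 : ℝ)).mul_const (∑ k, d k * p k i m)).const_add
      (∑ k, q k * p k i m)
  have := (hline.log (by simpa using (hq i m hx).ne')).const_mul (x i m : ℝ)
  simpa [mul_div_assoc] using this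

end LogLikelihood

section Maximum

variable {κ ι μ : Type*} [Fintype κ] [Fintype ι] [Fintype μ]
  (p : κ → ι → μ → ℝ) (x : ι → μ → ℕ) {q : κ → ℝ}

def IsLogLikMaxOnSimplex (q : κ → ℝ) : Prop :=
  ∀ q', (∀ k, 0 ≤ q' k) → ∑ k, q' k = 1 → LogLikFinite p x q' → logLik p x q' ≤ logLik p x q

variable {p x}

lemma eventually_logLikFinite_line (hq : LogLikFinite p x q) (d : κ → ℝ) :
    ∀ᶠ t in 𝓝 (0 : ℝ), LogLikFinite p x (q + t • d) := by
  refine eventually_all.2 fun i => eventually_all.2 fun m => ?_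
  rcases (x i m).eq_zero_or_pos with hx | hx
  · exact Eventually.of_forall fun _ h => absurd h (by omega)
  have hcont : Continuous fun t : ℝ => ∑ k, (q + t • d) k * p k i m := by fun_prop
  exact (hcont.tendsto' 0 _ (by simp)).eventually_const_lt (hq i m hx) |>.mono fun _ h _ => h

lemma eventually_pos_line (hq : ∀ k, 0 < q k) (d : κ → ℝ) :
    ∀ᶠ t in 𝓝 (0 : ℝ), ∀ k, 0 < (q + t • d) k := by
  refine eventually_all.2 fun k => ?_
  have hcont : Continuous fun t : ℝ => (q + t • d) k := by fun_prop
  exact (hcont.tendsto' 0 _ (by simp)).eventually_const_lt (hq k)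

lemma IsLogLikMaxOnSimplex.sum_mul_score_eq_zero (hmax : IsLogLikMaxOnSimplex p x q)
    (hpos : ∀ k, 0 < q k) (hsum : ∑ k, q k = 1) (hfin : LogLikFinite p x q)
    {d : κ → ℝ} (hd : ∑ k, d k = 0) :
    ∑ k, d k * score p x q k = 0 := by
  refine IsLocalMax.hasDerivAt_eq_zero ?_ (hasDerivAt_logLik_line hfin d)
  filter_upwards [eventually_pos_line hpos d, eventually_logLikFinite_line hfin d]
    with t hpos' hfin'
  rw [zero_smul, add_zero]
  refine hmax _ (fun k => (hpos' k).le) ?_ hfin'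
  simp [sum_add_distrib, ← mul_sum, hsum, hd]

lemma IsLogLikMaxOnSimplex.score_eq (hmax : IsLogLikMaxOnSimplex p x q)
    (hpos : ∀ k, 0 < q k) (hsum : ∑ k, q k = 1) (hfin : LogLikFinite p x q) (k : κ) :
    score p x q k = ∑ m, ∑ i, (x i m : ℝ) := by
  classical
  let d : κ → ℝ := Pi.single k 1 - q
  have hd : ∑ j, d j = 0 := by simp [d, sum_sub_distrib, hsum]
  have := hmax.sum_mul_score_eq_zero hpos hsum hfin hd
  simp only [d, Pi.sub_apply, sub_mul, sum_sub_distrib, sum_mul_score_self hfin] at this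
  simpa [Pi.single_apply, sub_eq_zero] using this

lemma isLogLikMaxOnSimplex_iff_score_eq (hpos : ∀ k, 0 < q k) (hsum : ∑ k, q k = 1)
    (hfin : LogLikFinite p x q) :
    IsLogLikMaxOnSimplex p x q ↔ ∀ k, score p x q k = ∑ m, ∑ i, (x i m : ℝ) := by
  refine ⟨fun hmax => hmax.score_eq hpos hsum hfin, fun hscore q' _ hsum' hfin' => ?_⟩
  have := logLik_sub_le hfin hfin'
  simp only [hscore, ← sum_mul, hsum', one_mul, sub_self] at this
  linarith

end Maximum

lemma EReal.coe_finset_sum {α : Type*} (s : Finset α) (f : α → ℝ) :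
    ((∑ a ∈ s, f a : ℝ) : EReal) = ∑ a ∈ s, (f a : EReal) :=
  map_sum (⟨⟨Real.toEReal, EReal.coe_zero⟩, EReal.coe_add⟩ : ℝ →+ EReal) f s

lemma EReal.sum_eq_bot_iff {α : Type*} {s : Finset α} {f : α → EReal} :
    ∑ a ∈ s, f a = ⊥ ↔ ∃ a ∈ s, f a = ⊥ :=
  WithBot.sum_eq_bot_iff

section Ell

variable {K I M : ℕ} {p : Fin K → Fin I → Fin M → ℝ} {x : Fin I → Fin M → ℕ}
  {q : Fin K → ℝ}

lemma ell_eq_coe_logLik (hq : LogLikFinite p x q) :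
    ell p x q = ((1 / (2 * (M : ℝ)) * logLik p x q : ℝ) : EReal) := by
  rw [ell, EReal.coe_mul, logLik, EReal.coe_finset_sum]
  congr 1
  refine sum_congr rfl fun m _ => ?_
  rw [EReal.coe_finset_sum]
  refine sum_congr rfl fun i _ => ?_
  rcases (x i m).eq_zero_or_pos with hx | hx
  · simp [hx]
  · rw [if_neg hx.ne', if_neg (hq i m hx).not_ge]

lemma ell_eq_bot (hq : ¬ LogLikFinite p x q) : ell p x q = ⊥ := by
  obtain ⟨i, m, hx, hle⟩ : ∃ i m, 0 < x i m ∧ ∑ k, q k * p k i m ≤ 0 := by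
    simpa [LogLikFinite] using hq
  have hM : (0 : ℝ) < M := by exact_mod_cast m.pos
  rw [ell, EReal.sum_eq_bot_iff.2 ⟨m, mem_univ m, EReal.sum_eq_bot_iff.2
    ⟨i, mem_univ i, by rw [if_neg hx.ne', if_pos hle]⟩⟩]
  exact EReal.mul_bot_of_pos (EReal.coe_pos.2 (by positivity))

lemma ell_le_ell_iff (hM : 1 ≤ M) {q' : Fin K → ℝ} (hq' : LogLikFinite p x q') :
    ell p x q ≤ ell p x q' ↔ (LogLikFinite p x q → logLik p x q ≤ logLik p x q') := by
  by_cases hq : LogLikFinite p x q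
  · have hc : (0 : ℝ) < 1 / (2 * M) := by positivity
    rw [ell_eq_coe_logLik hq, ell_eq_coe_logLik hq', EReal.coe_le_coe_iff,
      mul_le_mul_iff_of_pos_left hc]
    exact ⟨fun h _ => h, fun h => h hq⟩
  · simp [ell_eq_bot hq, hq]

end Ell

theorem ell_max_iff_fixed_point_general
    (K I M : ℕ) (hM : 1 ≤ M)
    (p : Fin K → Fin I → Fin M → ℝ)
    (hp0 : ∀ k i m, 0 ≤ p k i m)
    (x : Fin I → Fin M → ℕ)
    (hxsum : ∀ m, ∑ i, x i m = 2)
    (hA0 : ∀ i m, 0 < x i m → ∃ k, 0 < p k i m)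
    (qstar : Fin K → ℝ) (hqstar : memSInt qstar) :
    (∀ q, memS q → ell p x q ≤ ell p x qstar) ↔
      (∀ k, qstar k * gradEll p x qstar k = qstar k) := by
  obtain ⟨hpos, hsum⟩ := hqstar
  have hfin := logLikFinite_of_pos hp0 hA0 hpos
  have hcount : ∑ m, ∑ i, (x i m : ℝ) = 2 * M := by
    simp_rw [← Nat.cast_sum, hxsum]
    simp [mul_comm]
  have hfixed : ∀ k, qstar k * gradEll p x qstar k = qstar k ↔ score p x qstar k = 2 * M := by
    intro k
    have hM' : (2 * M : ℝ) ≠ 0 := by positivity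
    rw [mul_eq_left₀ (hpos k).ne', gradEll, ← score, one_div_mul_eq_div, div_eq_one_iff_eq hM']
  simp only [memS, and_imp, ell_le_ell_iff hM hfin, hfixed, ← hcount]
  exact isLogLikMaxOnSimplex_iff_score_eq hpos hsum hfin

/-- Under Assumptions 0 and 1, a point `q* ∈ S°` is the global
maximum of `ℓ` over `S` if and only if it is a fixed point of
`L(q)_k = q_k · g(q)_k`. -/
theorem ell_max_iff_fixed_point
    (K I M : ℕ) (hK : 2 ≤ K) (hI : 2 ≤ I) (hM : 1 ≤ M)
    (p : Fin K → Fin I → Fin M → ℝ)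
    (hp0 : ∀ k i m, 0 ≤ p k i m)
    (hp1 : ∀ k m, ∑ i, p k i m = 1)
    (x : Fin I → Fin M → ℕ)
    (hx2 : ∀ i m, x i m ≤ 2)
    (hxsum : ∀ m, ∑ i, x i m = 2)
    (hA0 : ∀ i m, 0 < x i m → ∃ k, 0 < p k i m)
    (hA1 : ∀ s : Fin K → ℝ, s ≠ 0 → ∑ k, s k = 0 →
      ∃ i m, 0 < x i m ∧ ∑ k, s k * p k i m ≠ 0)
    (qstar : Fin K → ℝ) (hqstar : memSInt qstar) :
    (∀ q, memS q → ell p x q ≤ ell p x qstar) ↔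
      (∀ k, qstar k * gradEll p x qstar k = qstar k) :=
  ell_max_iff_fixed_point_general K I M hM p hp0 x hxsum hA0 qstar hqstar
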